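/- Let z be a real-valued random variable on a probability space, let a > −4 be a real number, and let M ∈ ℝ be such that log E[ exp( (a+5)/(2(a+4)) · z² ) ] ≤ M (the expectation being finite). Then E[1/Φ(z)] is finite and log E[ 1/Φ(z) ] ≤ (1/2)·log(2π(a+4)) − a/(2(a+4)) + M, where Φ is the standard normal CDF. -/

import Mathlib

open MeasureTheory Real

/-- The standard normal cumulative distribution function. -/
noncomputable def stdNormalCDF (z : ℝ) : ℝ :=
  (Real.sqrt (2 * Real.pi))⁻¹ * ∫ t in Set.Iic z, Real.exp (-(t ^ 2) / 2)

/-!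
The rational function `r(x) = (x + 1) / (x² + x + 2)` satisfies `x r - r' ≤ 1`, so
`-exp (-x²/2) r(x)` is a primitive of a function below `exp (-x²/2)` that vanishes at `+∞`.
Hence `exp (-x²/2) r(x) ≤ ∫ₓ^∞ exp (-t²/2) dt`, and since `r(x) ≥ 1/√(x² + 4)` for
`x ≥ 0`, `Φ(z) ≥ exp (-z²/2) / √(2π (z² + 4))` for every `z`. The inequality `u ≤ exp (u - 1)` at
`u = (z² + 4)/(a + 4)` turns this into `1/Φ(z) ≤ C exp ((a+5)/(2(a+4)) z²)` with
`log C = ½ log (2π(a+4)) - a/(2(a+4))`, and integrating this bound gives the claim.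
-/

open Set Filter Topology

lemma integrable_exp_neg_sq_div_two : Integrable fun t : ℝ => exp (-(t ^ 2) / 2) := by
  simpa [neg_div, div_eq_inv_mul] using integrable_exp_neg_mul_sq (b := 1 / 2) (by norm_num)

lemma tendsto_exp_neg_sq_div_two_atTop :
    Tendsto (fun t : ℝ => exp (-(t ^ 2) / 2)) atTop (𝓝 0) :=
  tendsto_exp_atBot.comp <|
    (tendsto_neg_atTop_atBot.comp (tendsto_pow_atTop two_ne_zero)).atBot_div_const two_pos

lemma sq_add_self_add_two_pos (t : ℝ) : 0 < t ^ 2 + t + 2 := by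
  nlinarith [sq_nonneg (t + 1 / 2)]

/-- The function `r` above, a lower bound for the Mills ratio `exp (x²/2) ∫ₓ^∞ exp (-t²/2)`. -/
noncomputable def millsLowerBound (x : ℝ) : ℝ := (x + 1) / (x ^ 2 + x + 2)

lemma abs_millsLowerBound_le_one (x : ℝ) : |millsLowerBound x| ≤ 1 := by
  have hq := sq_add_self_add_two_pos x
  rw [millsLowerBound, abs_div, abs_of_pos hq, div_le_one hq, abs_le]
  constructor <;> nlinarith [sq_nonneg (x + 1)]

lemma inv_sqrt_le_millsLowerBound {x : ℝ} (hx : 0 ≤ x) :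
    (√(x ^ 2 + 4))⁻¹ ≤ millsLowerBound x := by
  have hq := sq_add_self_add_two_pos x
  rw [millsLowerBound, inv_le_iff_one_le_mul₀ (by positivity), div_mul_eq_mul_div,
    one_le_div hq, ← sqrt_sq (by linarith : 0 ≤ x + 1), ← sqrt_mul (by positivity),
    le_sqrt hq.le (by positivity)]
  nlinarith

/-- The derivative is `exp (-t²/2) (t r - r')`, and `t r - r' = 1 - (t² + 5)/(t² + t + 2)²`. -/
lemma hasDerivAt_neg_exp_mul_millsLowerBound (t : ℝ) :
    HasDerivAt (fun s => -(exp (-(s ^ 2) / 2) * millsLowerBound s))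
      (exp (-(t ^ 2) / 2) * (1 - (t ^ 2 + 5) / (t ^ 2 + t + 2) ^ 2)) t := by
  have hq := (sq_add_self_add_two_pos t).ne'
  have hexp : HasDerivAt (fun s => exp (-(s ^ 2) / 2)) (exp (-(t ^ 2) / 2) * -t) t :=
    ((hasDerivAt_pow 2 t).neg.div_const 2).exp.congr_deriv (by simp; ring)
  have hrat : HasDerivAt millsLowerBound
      ((t ^ 2 + t + 2 - (t + 1) * (2 * t + 1)) / (t ^ 2 + t + 2) ^ 2) t :=
    (((hasDerivAt_id t).add_const 1).div
      (((hasDerivAt_pow 2 t).add (hasDerivAt_id t)).add_const 2) hq).congr_deriv (by simp)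
  refine (hexp.mul hrat).neg.congr_deriv ?_
  rw [millsLowerBound]
  generalize hq' : t ^ 2 + t + 2 = q at *
  field_simp
  linear_combination (q + 3) * hq'

lemma integrableOn_deriv_neg_exp_mul_millsLowerBound (x : ℝ) : IntegrableOn
    (fun t => exp (-(t ^ 2) / 2) * (1 - (t ^ 2 + 5) / (t ^ 2 + t + 2) ^ 2)) (Ioi x) := by
  refine (integrable_exp_neg_sq_div_two.mul_bdd (c := 1) ?_
    (ae_of_all _ fun t => ?_)).integrableOn
  · exact (continuous_const.sub ((by fun_prop : Continuous fun t : ℝ => t ^ 2 + 5).div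
      (by fun_prop) fun t => (pow_pos (sq_add_self_add_two_pos t) 2).ne')).aestronglyMeasurable
  · have hq := pow_pos (sq_add_self_add_two_pos t) 2
    have h0 : 0 ≤ (t ^ 2 + 5) / (t ^ 2 + t + 2) ^ 2 := by positivity
    have h2 : (t ^ 2 + 5) / (t ^ 2 + t + 2) ^ 2 ≤ 2 := by
      rw [div_le_iff₀ hq]
      nlinarith [sq_nonneg (t + 1 / 2), sq_nonneg (t ^ 2 + t), sq_nonneg (t + 1)]
    rw [norm_eq_abs, abs_le]
    constructor <;> linarith

lemma exp_mul_millsLowerBound_le_integral_Ioi (x : ℝ) :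
    exp (-(x ^ 2) / 2) * millsLowerBound x ≤ ∫ t in Ioi x, exp (-(t ^ 2) / 2) := by
  have hlim : Tendsto (fun s => -(exp (-(s ^ 2) / 2) * millsLowerBound s)) atTop (𝓝 0) := by
    simpa using (tendsto_exp_neg_sq_div_two_atTop.zero_mul_isBoundedUnder_le
      (isBoundedUnder_of ⟨1, fun s => by simpa using abs_millsLowerBound_le_one s⟩)).neg
  have hFTC := integral_Ioi_of_hasDerivAt_of_tendsto'
    (fun t _ => hasDerivAt_neg_exp_mul_millsLowerBound t)
    (integrableOn_deriv_neg_exp_mul_millsLowerBound x) hlim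
  rw [zero_sub, neg_neg] at hFTC
  rw [← hFTC]
  refine setIntegral_mono_on (integrableOn_deriv_neg_exp_mul_millsLowerBound x)
    integrable_exp_neg_sq_div_two.integrableOn measurableSet_Ioi fun t _ => ?_
  refine mul_le_of_le_one_right (exp_pos _).le (sub_le_self _ ?_)
  positivity

lemma stdNormalCDF_eq_integral_Ioi (z : ℝ) :
    stdNormalCDF z = (√(2 * π))⁻¹ * ∫ t in Ioi (-z), exp (-(t ^ 2) / 2) := by
  rw [stdNormalCDF, ← integral_comp_neg_Iic]
  simp only [neg_sq]

lemma stdNormalCDF_mono : Monotone stdNormalCDF := fun _ _ hxy =>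
  mul_le_mul_of_nonneg_left (setIntegral_mono_set integrable_exp_neg_sq_div_two.integrableOn
    (ae_of_all _ fun _ => (exp_pos _).le) (Iic_subset_Iic.mpr hxy).eventuallyLE) (by positivity)

lemma inv_sqrt_mul_exp_le_stdNormalCDF (z : ℝ) :
    (√(2 * π))⁻¹ * (exp (-(z ^ 2) / 2) * (√(z ^ 2 + 4))⁻¹) ≤ stdNormalCDF z := by
  rcases le_total z 0 with hz | hz
  · rw [stdNormalCDF_eq_integral_Ioi, ← neg_sq z]
    refine mul_le_mul_of_nonneg_left ?_ (by positivity)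
    exact (mul_le_mul_of_nonneg_left (inv_sqrt_le_millsLowerBound (neg_nonneg.mpr hz))
      (exp_pos _).le).trans (exp_mul_millsLowerBound_le_integral_Ioi (-z))
  · refine le_trans ?_ (stdNormalCDF_mono hz)
    rw [stdNormalCDF_eq_integral_Ioi, neg_zero]
    refine mul_le_mul_of_nonneg_left ?_ (by positivity)
    calc exp (-(z ^ 2) / 2) * (√(z ^ 2 + 4))⁻¹ ≤ 1 * 2⁻¹ := by
          gcongr
          · exact exp_le_one_iff.mpr (by nlinarith)
          · rw [le_sqrt (by norm_num) (by positivity)]; nlinarith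
      _ = exp (-(0 ^ 2) / 2) * millsLowerBound 0 := by norm_num [millsLowerBound]
      _ ≤ _ := exp_mul_millsLowerBound_le_integral_Ioi 0

lemma stdNormalCDF_pos (z : ℝ) : 0 < stdNormalCDF z :=
  lt_of_lt_of_le (by positivity) (inv_sqrt_mul_exp_le_stdNormalCDF z)

lemma sqrt_le_sqrt_mul_exp {c : ℝ} (hc : 0 < c) (u : ℝ) :
    √u ≤ √c * exp ((u / c - 1) / 2) := by
  rw [exp_half, ← sqrt_mul hc.le]
  refine sqrt_le_sqrt ?_
  have := add_one_le_exp (u / c - 1)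
  rwa [sub_add_cancel, div_le_iff₀' hc] at this

lemma one_div_stdNormalCDF_le {a : ℝ} (ha : -4 < a) (z : ℝ) :
    1 / stdNormalCDF z ≤ √(2 * π * (a + 4)) * exp (-(a / (2 * (a + 4))))
      * exp ((a + 5) / (2 * (a + 4)) * z ^ 2) := by
  have ha4 : 0 < a + 4 := by linarith
  have hΦ := inv_sqrt_mul_exp_le_stdNormalCDF z
  calc 1 / stdNormalCDF z ≤ √(2 * π) * √(z ^ 2 + 4) * exp (z ^ 2 / 2) := by
        rw [div_le_iff₀ (stdNormalCDF_pos z)]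
        calc (1 : ℝ) = √(2 * π) * √(z ^ 2 + 4) * exp (z ^ 2 / 2)
              * ((√(2 * π))⁻¹ * (exp (-(z ^ 2) / 2) * (√(z ^ 2 + 4))⁻¹)) := by
              field_simp
              rw [← exp_add, add_neg_cancel, exp_zero]
          _ ≤ _ := by gcongr
    _ ≤ √(2 * π) * (√(a + 4) * exp (((z ^ 2 + 4) / (a + 4) - 1) / 2)) * exp (z ^ 2 / 2) := by
        gcongr
        exact sqrt_le_sqrt_mul_exp ha4 _
    _ = _ := by
        have hexp : exp (((z ^ 2 + 4) / (a + 4) - 1) / 2) * exp (z ^ 2 / 2)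
            = exp (-(a / (2 * (a + 4)))) * exp ((a + 5) / (2 * (a + 4)) * z ^ 2) := by
          rw [← exp_add, ← exp_add]
          congr 1
          field_simp
          ring
        rw [sqrt_mul two_pi_pos.le]
        linear_combination √(2 * π) * √(a + 4) * hexp

lemma integrable_and_log_integral_le_of_le_const_mul {Ω : Type*} [MeasurableSpace Ω]
    {μ : Measure Ω} [NeZero μ] {f g : Ω → ℝ} {C : ℝ} (hC : 0 < C) (hf_pos : ∀ ω, 0 < f ω)
    (hf : AEStronglyMeasurable f μ) (hg : Integrable g μ) (hfg : ∀ ω, f ω ≤ C * g ω) :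
    Integrable f μ ∧ log (∫ ω, f ω ∂μ) ≤ log C + log (∫ ω, g ω ∂μ) := by
  have hf_int : Integrable f μ := (hg.const_mul C).mono' hf
    (ae_of_all _ fun ω => by rw [norm_eq_abs, abs_of_pos (hf_pos ω)]; exact hfg ω)
  have hf_integral_pos : 0 < ∫ ω, f ω ∂μ := by
    rw [integral_pos_iff_support_of_nonneg (fun ω => (hf_pos ω).le) hf_int,
      Function.support_eq_univ fun ω => (hf_pos ω).ne']
    exact Measure.measure_univ_pos.mpr (NeZero.ne μ)
  have hle : ∫ ω, f ω ∂μ ≤ C * ∫ ω, g ω ∂μ := by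
    rw [← integral_const_mul]
    exact integral_mono hf_int (hg.const_mul C) hfg
  have hg_integral_pos : 0 < ∫ ω, g ω ∂μ :=
    pos_of_mul_pos_right (hf_integral_pos.trans_le hle) hC.le
  refine ⟨hf_int, ?_⟩
  rw [← log_mul hC.ne' hg_integral_pos.ne']
  exact log_le_log hf_integral_pos hle

/-- If `z` is a real random variable, `a > -4` and
`log E[exp((a+5)/(2(a+4))·z²)] ≤ M` (the expectation being finite), then `E[1/Φ(z)]`
is finite and `log E[1/Φ(z)] ≤ (1/2)log(2π(a+4)) − a/(2(a+4)) + M`. -/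
theorem stmt_5 {Ω : Type*} [MeasurableSpace Ω] (μ : Measure Ω) [IsProbabilityMeasure μ]
    (z : Ω → ℝ) (hz : Measurable z) (a M : ℝ) (ha : -4 < a)
    (hint : Integrable (fun ω => Real.exp ((a + 5) / (2 * (a + 4)) * z ω ^ 2)) μ)
    (hM : Real.log (∫ ω, Real.exp ((a + 5) / (2 * (a + 4)) * z ω ^ 2) ∂μ) ≤ M) :
    Integrable (fun ω => 1 / stdNormalCDF (z ω)) μ ∧
      Real.log (∫ ω, 1 / stdNormalCDF (z ω) ∂μ)
        ≤ (1 / 2) * Real.log (2 * Real.pi * (a + 4)) - a / (2 * (a + 4)) + M := by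
  have hc : 0 < 2 * π * (a + 4) := mul_pos two_pi_pos (by linarith)
  have hC : 0 < √(2 * π * (a + 4)) * exp (-(a / (2 * (a + 4)))) := by positivity
  have hlogC : log (√(2 * π * (a + 4)) * exp (-(a / (2 * (a + 4)))))
      = (1 / 2) * log (2 * π * (a + 4)) - a / (2 * (a + 4)) := by
    rw [log_mul (sqrt_pos.mpr hc).ne' (exp_pos _).ne', log_sqrt hc.le, log_exp]
    ring
  obtain ⟨hint_inv, hlog⟩ := integrable_and_log_integral_le_of_le_const_mul hC
    (fun ω => one_div_pos.mpr (stdNormalCDF_pos (z ω)))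
    ((stdNormalCDF_mono.measurable.comp hz).const_div 1).aestronglyMeasurable hint
    (fun ω => one_div_stdNormalCDF_le ha (z ω))
  exact ⟨hint_inv, by linarith⟩
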